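/- arXiv:2107.01551 — 2 statements merged into one kernel-verified Lean document; each statement's English description precedes it below -/
import Mathlib

section
/- Suppose b > Nμχ/4. Let u, v : ℝ^N × (0,∞) → ℝ be a classical solution of (KS) on ℝ^N × (0,∞) (i.e. u is C¹ in t and C² in x, both equations hold pointwise) such that in addition v is three times continuously differentiable in x, ∇v is continuously differentiable in t, and ∂_t ∇v = ∇ ∂_t v on ℝ^N × (0,∞). Set w(x,t) = u(x,t) + (χ/(2μ)) |∇v(x,t)|². Then ∂_t w(x,t) ≤ Δw(x,t) + a w(x,t) for all x ∈ ℝ^N and t > 0. -/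
open Real Filter MeasureTheory RealInnerProductSpace

noncomputable section

/-- Euclidean space `ℝ^N`. -/
abbrev Eu (N : ℕ) := EuclideanSpace ℝ (Fin N)

/-- First-order partial derivative in the `i`-th coordinate direction. -/
def pd {N : ℕ} (f : Eu N → ℝ) (i : Fin N) (x : Eu N) : ℝ :=
  fderiv ℝ f x (EuclideanSpace.single i 1)

/-- Second-order partial derivative `∂_{x_i x_j}`. -/
def pd2 {N : ℕ} (f : Eu N → ℝ) (i j : Fin N) (x : Eu N) : ℝ :=
  pd (fun y => pd f j y) i x

/-- Laplacian `Δf = Σ_i ∂²f/∂x_i²`. -/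
def lap {N : ℕ} (f : Eu N → ℝ) (x : Eu N) : ℝ := ∑ i, pd2 f i i x

/-- Divergence `∇·F = Σ_i ∂F_i/∂x_i` of a vector field. -/
def divg {N : ℕ} (F : Eu N → Eu N) (x : Eu N) : ℝ :=
  ∑ i, fderiv ℝ (fun y => F y i) x (EuclideanSpace.single i 1)

/-- `(u,v)` is a global classical solution of (KS) with initial data `(u₀,v₀)`:
continuous on `ℝ^N × [0,∞)`, once continuously differentiable in `t` and twice in `x`
for `t > 0`, satisfying both equations pointwise for `t > 0`. -/
structure IsClassicalSolution {N : ℕ} (χ a b lam mu : ℝ)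
    (u v : Eu N → ℝ → ℝ) (u₀ v₀ : Eu N → ℝ) : Prop where
  contu : ContinuousOn (fun p : Eu N × ℝ => u p.1 p.2) {p : Eu N × ℝ | 0 ≤ p.2}
  contv : ContinuousOn (fun p : Eu N × ℝ => v p.1 p.2) {p : Eu N × ℝ | 0 ≤ p.2}
  regu : ∀ t : ℝ, 0 < t → ContDiff ℝ 2 (fun x => u x t)
  regv : ∀ t : ℝ, 0 < t → ContDiff ℝ 2 (fun x => v x t)
  pdeu : ∀ (x : Eu N) (t : ℝ), 0 < t →
    HasDerivAt (fun s => u x s)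
      (lap (fun y => u y t) x
        - χ * divg (fun y => u y t • gradient (fun z => v z t) y) x
        + u x t * (a - b * u x t)) t
  pdev : ∀ (x : Eu N) (t : ℝ), 0 < t →
    HasDerivAt (fun s => v x s)
      (lap (fun y => v y t) x - lam * v x t + mu * u x t) t
  initu : ∀ x, u x 0 = u₀ x
  initv : ∀ x, v x 0 = v₀ x

/-- A solution is bounded on `ℝ^N × [0,∞)`. -/
def BoundedSol {N : ℕ} (u v : Eu N → ℝ → ℝ) : Prop :=
  ∃ C : ℝ, ∀ (x : Eu N) (t : ℝ), 0 ≤ t → |u x t| ≤ C ∧ |v x t| ≤ C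

/-- A solution is nonnegative. -/
def NonnegSol {N : ℕ} (u v : Eu N → ℝ → ℝ) : Prop :=
  ∀ (x : Eu N) (t : ℝ), 0 ≤ t → 0 ≤ u x t ∧ 0 ≤ v x t

/-- Membership in `X₁⁺`: bounded, uniformly continuous and nonnegative. -/
def MemX1plus {N : ℕ} (f : Eu N → ℝ) : Prop :=
  UniformContinuous f ∧ (∃ C, ∀ x, |f x| ≤ C) ∧ ∀ x, 0 ≤ f x

/-- Membership in `X₂⁺`: in `X₁⁺`, differentiable, and all first-order partial
derivatives are bounded and uniformly continuous. -/
def MemX2plus {N : ℕ} (f : Eu N → ℝ) : Prop :=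
  MemX1plus f ∧ Differentiable ℝ f ∧
    ∀ i : Fin N, UniformContinuous (fun x => pd f i x) ∧ ∃ C, ∀ x, |pd f i x| ≤ C

/-! Write `|D²v|² = ∑ᵢ |∇∂ᵢv|²`. Bochner's identity `Δ|∇v|² = 2|D²v|² + 2 ∇v·∇Δv`, the
`v`-equation differentiated in space, and `∇·(u∇v) = ∇u·∇v + uΔv` give
`w_t - Δw - a w = -(χ u Δv + b u² + (χ/μ)|D²v|²) - (χ/(2μ))(2λ + a)|∇v|²`:
the weight `χ/(2μ)` is chosen so that the cross terms `χ ∇u·∇v` cancel. Since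
`(Δv)² ≤ N |D²v|²`, completing the square shows that `χ u Δv + b u² + (χ/μ)|D²v|² ≥ 0`
as soon as `Nμχ ≤ 4b`. -/

section Gradient

variable {F : Type*} [NormedAddCommGroup F] [InnerProductSpace ℝ F] [CompleteSpace F]
  {f g : F → ℝ} {x : F}

theorem gradient_fun_add (hf : DifferentiableAt ℝ f x) (hg : DifferentiableAt ℝ g x) :
    gradient (fun y => f y + g y) x = gradient f x + gradient g x := by
  simp [gradient, fderiv_fun_add hf hg]

theorem gradient_fun_sub (hf : DifferentiableAt ℝ f x) (hg : DifferentiableAt ℝ g x) :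
    gradient (fun y => f y - g y) x = gradient f x - gradient g x := by
  simp [gradient, fderiv_fun_sub hf hg]

theorem gradient_const_mul (c : ℝ) (hf : DifferentiableAt ℝ f x) :
    gradient (fun y => c * f y) x = c • gradient f x := by
  simp [gradient, fderiv_const_mul hf]

end Gradient

section PartialDerivatives

variable {N : ℕ} {f g : Eu N → ℝ} {x : Eu N} {i : Fin N}

theorem gradient_apply_eq_pd (f : Eu N → ℝ) (x : Eu N) (i : Fin N) :
    gradient f x i = pd f i x := by
  have : gradient f x i = ⟪gradient f x, EuclideanSpace.single i (1 : ℝ)⟫ := by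
    rw [EuclideanSpace.inner_single_right]; simp
  rw [this, gradient, InnerProductSpace.toDual_symm_apply]
  rfl

theorem inner_gradient_eq_sum (f g : Eu N → ℝ) (x : Eu N) :
    ⟪gradient f x, gradient g x⟫ = ∑ i, pd f i x * pd g i x := by
  rw [PiLp.inner_apply]
  simp [gradient_apply_eq_pd, mul_comm]

theorem norm_gradient_sq_eq_sum (f : Eu N → ℝ) (x : Eu N) :
    ‖gradient f x‖ ^ 2 = ∑ i, pd f i x ^ 2 := by
  rw [← real_inner_self_eq_norm_sq, inner_gradient_eq_sum]
  simp [sq]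

theorem pd_add (hf : DifferentiableAt ℝ f x) (hg : DifferentiableAt ℝ g x) :
    pd (fun y => f y + g y) i x = pd f i x + pd g i x := by
  simp [pd, fderiv_fun_add hf hg]

theorem pd_const_mul (c : ℝ) (hf : DifferentiableAt ℝ f x) :
    pd (fun y => c * f y) i x = c * pd f i x := by
  simp [pd, fderiv_const_mul hf]

theorem pd_mul (hf : DifferentiableAt ℝ f x) (hg : DifferentiableAt ℝ g x) :
    pd (fun y => f y * g y) i x = pd f i x * g x + f x * pd g i x := by
  simp only [pd, fderiv_fun_mul hf hg, add_apply, smul_apply, smul_eq_mul]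
  ring

theorem pd_sum {ι : Type*} (s : Finset ι) {F : ι → Eu N → ℝ}
    (hF : ∀ k ∈ s, DifferentiableAt ℝ (F k) x) :
    pd (fun y => ∑ k ∈ s, F k y) i x = ∑ k ∈ s, pd (F k) i x := by
  simp [pd, fderiv_fun_sum hF]

theorem ContDiff.contDiff_pd {m n : WithTop ℕ∞} (hf : ContDiff ℝ n f) (hmn : m + 1 ≤ n) :
    ContDiff ℝ m (fun y => pd f i y) :=
  (hf.fderiv_right hmn).clm_apply contDiff_const

theorem ContDiff.differentiable_pd (hf : ContDiff ℝ 2 f) :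
    Differentiable ℝ (fun y => pd f i y) :=
  (hf.contDiff_pd (m := 1) le_rfl).differentiable one_ne_zero

theorem pd2_eq_fderiv_fderiv (hf : ContDiff ℝ 2 f) (i j : Fin N) (x : Eu N) :
    pd2 f i j x
      = fderiv ℝ (fderiv ℝ f) x (EuclideanSpace.single i 1) (EuclideanSpace.single j 1) := by
  have hdf : DifferentiableAt ℝ (fderiv ℝ f) x :=
    (hf.fderiv_right (m := 1) le_rfl).differentiable one_ne_zero x
  simp [pd2, pd, fderiv_clm_apply hdf (differentiableAt_const _)]

theorem pd2_comm (hf : ContDiff ℝ 2 f) (i j : Fin N) (x : Eu N) :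
    pd2 f i j x = pd2 f j i x := by
  rw [pd2_eq_fderiv_fderiv hf, pd2_eq_fderiv_fderiv hf,
    hf.contDiffAt.isSymmSndFDerivAt (by simp)]

end PartialDerivatives

section Laplacian

variable {N : ℕ} {f g : Eu N → ℝ} {x : Eu N}

theorem lap_add (hf : ContDiff ℝ 2 f) (hg : ContDiff ℝ 2 g) :
    lap (fun y => f y + g y) x = lap f x + lap g x := by
  have h : ∀ j, (fun y => pd (fun z => f z + g z) j y) = fun y => pd f j y + pd g j y :=
    fun j => funext fun y =>
      pd_add (hf.differentiable two_ne_zero y) (hg.differentiable two_ne_zero y)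
  simp only [lap, pd2, h, pd_add (hf.differentiable_pd x) (hg.differentiable_pd x),
    Finset.sum_add_distrib]

theorem lap_const_mul (c : ℝ) (hf : ContDiff ℝ 2 f) :
    lap (fun y => c * f y) x = c * lap f x := by
  have h : ∀ j, (fun y => pd (fun z => c * f z) j y) = fun y => c * pd f j y :=
    fun j => funext fun y => pd_const_mul c (hf.differentiable two_ne_zero y)
  simp only [lap, pd2, h, pd_const_mul c (hf.differentiable_pd x), Finset.mul_sum]

theorem lap_sum {ι : Type*} (s : Finset ι) {F : ι → Eu N → ℝ}
    (hF : ∀ k ∈ s, ContDiff ℝ 2 (F k)) :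
    lap (fun y => ∑ k ∈ s, F k y) x = ∑ k ∈ s, lap (F k) x := by
  have h : ∀ j, (fun y => pd (fun z => ∑ k ∈ s, F k z) j y) = fun y => ∑ k ∈ s, pd (F k) j y :=
    fun j => funext fun y => pd_sum s fun k hk => (hF k hk).differentiable two_ne_zero y
  simp only [lap, pd2, h, pd_sum s fun k hk => (hF k hk).differentiable_pd x]
  exact Finset.sum_comm

theorem lap_sq (hf : ContDiff ℝ 2 f) :
    lap (fun y => f y ^ 2) x = 2 * ‖gradient f x‖ ^ 2 + 2 * f x * lap f x := by
  have hd := hf.differentiable two_ne_zero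
  have h : ∀ j, (fun y => pd (fun z => f z ^ 2) j y) = fun y => 2 * (f y * pd f j y) := by
    intro j
    funext y
    simp only [sq, pd_mul (hd y) (hd y)]
    ring
  simp only [lap, pd2, h, pd_const_mul 2 ((hd x).fun_mul (hf.differentiable_pd x)),
    pd_mul (hd x) (hf.differentiable_pd x), norm_gradient_sq_eq_sum, Finset.mul_sum,
    ← Finset.sum_add_distrib]
  exact Finset.sum_congr rfl fun j _ => by ring

theorem pd_lap (hf : ContDiff ℝ 3 f) (i : Fin N) (x : Eu N) :
    pd (lap f) i x = lap (fun y => pd f i y) x := by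
  have hf2 : ContDiff ℝ 2 f := hf.of_le (by norm_num)
  have hpd : ∀ j, ContDiff ℝ 2 (fun y => pd f j y) := fun j => hf.contDiff_pd (by norm_num)
  unfold lap
  rw [pd_sum (F := fun j y => pd2 f j j y) _ fun j _ => (hpd j).differentiable_pd x]
  refine Finset.sum_congr rfl fun j _ => ?_
  calc pd (fun y => pd2 f j j y) i x = pd2 (fun y => pd f j y) i j x := rfl
    _ = pd2 (fun y => pd f j y) j i x := pd2_comm (hpd j) i j x
    _ = pd2 (fun y => pd f i y) j j x := by
      simp only [pd2]
      congr 1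
      funext y
      exact pd2_comm hf2 i j y

theorem ContDiff.differentiable_lap (hf : ContDiff ℝ 3 f) : Differentiable ℝ (lap f) :=
  Differentiable.fun_sum fun i _ => (hf.contDiff_pd (i := i) (m := 2) le_rfl).differentiable_pd

theorem ContDiff.norm_gradient_sq (hf : ContDiff ℝ 3 f) :
    ContDiff ℝ 2 (fun y => ‖gradient f y‖ ^ 2) := by
  simp only [norm_gradient_sq_eq_sum]
  exact ContDiff.sum fun i _ => (hf.contDiff_pd (by norm_num)).pow 2

theorem lap_norm_gradient_sq (hf : ContDiff ℝ 3 f) :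
    lap (fun y => ‖gradient f y‖ ^ 2) x
      = 2 * ∑ i, ‖gradient (fun y => pd f i y) x‖ ^ 2
        + 2 * ⟪gradient f x, gradient (lap f) x⟫ := by
  have hpd : ∀ i, ContDiff ℝ 2 (fun y => pd f i y) := fun i => hf.contDiff_pd (by norm_num)
  simp only [norm_gradient_sq_eq_sum f]
  rw [lap_sum _ fun i _ => (hpd i).pow 2, inner_gradient_eq_sum]
  simp only [lap_sq (hpd _), pd_lap hf, Finset.sum_add_distrib, Finset.mul_sum, mul_assoc]

theorem sq_lap_le_mul_sum (f : Eu N → ℝ) (x : Eu N) :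
    lap f x ^ 2 ≤ N * ∑ i, ‖gradient (fun y => pd f i y) x‖ ^ 2 :=
  calc lap f x ^ 2 = (∑ i, pd2 f i i x) ^ 2 := rfl
    _ ≤ N * ∑ i, pd2 f i i x ^ 2 := by
      simpa using sq_sum_le_card_mul_sum_sq (s := Finset.univ) (f := fun i => pd2 f i i x)
    _ ≤ N * ∑ i, ‖gradient (fun y => pd f i y) x‖ ^ 2 := by
      refine mul_le_mul_of_nonneg_left (Finset.sum_le_sum fun i _ => ?_) (Nat.cast_nonneg N)
      rw [norm_gradient_sq_eq_sum]
      exact Finset.single_le_sum (f := fun j => pd (fun y => pd f i y) j x ^ 2)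
        (fun _ _ => sq_nonneg _) (Finset.mem_univ i)

theorem divg_smul_gradient (hf : DifferentiableAt ℝ f x) (hg : ContDiff ℝ 2 g) :
    divg (fun y => f y • gradient g y) x = ⟪gradient f x, gradient g x⟫ + f x * lap g x := by
  have h : ∀ i, (fun y => (f y • gradient g y) i) = fun y => f y * pd g i y := fun i =>
    funext fun y => by simp [gradient_apply_eq_pd]
  change ∑ i, pd (fun y => (f y • gradient g y) i) i x = _
  simp only [h, pd_mul hf (hg.differentiable_pd x), Finset.sum_add_distrib, ← Finset.mul_sum,
    inner_gradient_eq_sum]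
  rfl

end Laplacian

theorem mul_add_sq_add_nonneg_of_sq_le {n b χ κ A T S : ℝ} (hb : 0 < b) (hS : 0 ≤ S)
    (hT : T ^ 2 ≤ n * S) (hκ : n * χ ^ 2 ≤ 4 * b * κ) :
    0 ≤ χ * (A * T) + b * A ^ 2 + κ * S := by
  have h : 4 * b * (χ * (A * T) + b * A ^ 2 + κ * S)
      = (2 * b * A + χ * T) ^ 2 + χ ^ 2 * (n * S - T ^ 2) + S * (4 * b * κ - n * χ ^ 2) := by
    ring
  have h4b : 0 ≤ 4 * b * (χ * (A * T) + b * A ^ 2 + κ * S) := by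
    rw [h]
    have := sub_nonneg.2 hT
    have := sub_nonneg.2 hκ
    positivity
  exact (mul_nonneg_iff_of_pos_left (by positivity)).1 h4b

theorem hasDerivAt_norm_gradient_sq {N : ℕ} {u v : Eu N → ℝ → ℝ} {lam mu t : ℝ} {x : Eu N}
    (hu : DifferentiableAt ℝ (fun y => u y t) x) (hv : ContDiff ℝ 3 (fun y => v y t))
    (hvt : ∀ y, HasDerivAt (fun s => v y s)
      (lap (fun z => v z t) y - lam * v y t + mu * u y t) t)
    (hgv : HasDerivAt (fun s => gradient (fun y => v y s) x)
      (gradient (fun y => deriv (fun s => v y s) t) x) t) :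
    HasDerivAt (fun s => ‖gradient (fun y => v y s) x‖ ^ 2)
      (2 * (⟪gradient (fun y => v y t) x, gradient (lap fun y => v y t) x⟫
        - lam * ‖gradient (fun y => v y t) x‖ ^ 2
        + mu * ⟪gradient (fun y => u y t) x, gradient (fun y => v y t) x⟫)) t := by
  have hdv := hv.differentiable (by norm_num) x
  have hdlap := hv.differentiable_lap x
  have hgrad : gradient (fun y => deriv (fun s => v y s) t) x
      = gradient (lap fun y => v y t) x - lam • gradient (fun y => v y t) x
        + mu • gradient (fun y => u y t) x := by
    simp only [fun y => (hvt y).deriv]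
    rw [gradient_fun_add (hdlap.fun_sub (hdv.const_mul lam)) (hu.const_mul mu),
      gradient_fun_sub hdlap (hdv.const_mul lam), gradient_const_mul lam hdv,
      gradient_const_mul mu hu]
  convert hgv.norm_sq using 1
  rw [hgrad, inner_add_right, inner_sub_right, real_inner_smul_right, real_inner_smul_right,
    real_inner_self_eq_norm_sq, real_inner_comm (gradient (fun y => u y t) x)]

theorem statement13_general (N : ℕ) (χ a b lam mu : ℝ)
    (hχ : 0 < χ) (ha : 0 < a) (hlam : 0 < lam) (hmu : 0 < mu)
    (hcond : b > N * mu * χ / 4)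
    (u v : Eu N → ℝ → ℝ)
    (hru : ∀ t : ℝ, 0 < t → ContDiff ℝ 2 (fun x => u x t))
    (hrv : ∀ t : ℝ, 0 < t → ContDiff ℝ 3 (fun x => v x t))
    (hpdeu : ∀ (x : Eu N) (t : ℝ), 0 < t →
      HasDerivAt (fun s => u x s)
        (lap (fun y => u y t) x
          - χ * divg (fun y => u y t • gradient (fun z => v z t) y) x
          + u x t * (a - b * u x t)) t)
    (hpdev : ∀ (x : Eu N) (t : ℝ), 0 < t →
      HasDerivAt (fun s => v x s)
        (lap (fun y => v y t) x - lam * v x t + mu * u x t) t)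
    (hgv : ∀ (x : Eu N) (t : ℝ), 0 < t →
      HasDerivAt (fun s => gradient (fun y => v y s) x)
        (gradient (fun y => deriv (fun s => v y s) t) x) t) :
    ∀ (x : Eu N) (t : ℝ), 0 < t →
      deriv (fun s => u x s + χ / (2 * mu) * ‖gradient (fun y => v y s) x‖ ^ 2) t ≤
        lap (fun y => u y t + χ / (2 * mu) * ‖gradient (fun z => v z t) y‖ ^ 2) x
          + a * (u x t + χ / (2 * mu) * ‖gradient (fun y => v y t) x‖ ^ 2) := by
  intro x t ht
  set U := fun y => u y t
  set V := fun y => v y t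
  have hU : ContDiff ℝ 2 U := hru t ht
  have hV : ContDiff ℝ 3 V := hrv t ht
  have hderiv := (hpdeu x t ht).fun_add
    ((hasDerivAt_norm_gradient_sq (hU.differentiable two_ne_zero x) hV
      (fun y => hpdev y t ht) (hgv x t ht)).const_mul (χ / (2 * mu)))
  rw [hderiv.deriv, lap_add hU (contDiff_const.mul hV.norm_gradient_sq),
    lap_const_mul _ hV.norm_gradient_sq, lap_norm_gradient_sq hV,
    divg_smul_gradient (hU.differentiable two_ne_zero x) (hV.of_le (by norm_num)),
    show u x t = U x from rfl]
  have hb : 0 < b := lt_of_le_of_lt (by positivity) hcond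
  have hκ : N * χ ^ 2 ≤ 4 * b * (2 * (χ / (2 * mu))) := by
    have : (N : ℝ) * χ ^ 2 = N * mu * χ * (2 * (χ / (2 * mu))) := by field_simp
    rw [this]
    exact mul_le_mul_of_nonneg_right (by linarith) (by positivity)
  have hS : 0 ≤ ∑ i, ‖gradient (fun y => pd V i y) x‖ ^ 2 := by positivity
  have key := mul_add_sq_add_nonneg_of_sq_le (A := U x) hb hS (sq_lap_le_mul_sum V x) hκ
  have hcancel : χ / (2 * mu) * (2 * (mu * ⟪gradient U x, gradient V x⟫))
      = χ * ⟪gradient U x, gradient V x⟫ := by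
    field_simp
  have hlamc : 0 ≤ χ / (2 * mu) * lam * ‖gradient V x‖ ^ 2 := by positivity
  have hac : 0 ≤ a * (χ / (2 * mu)) * ‖gradient V x‖ ^ 2 := by positivity
  linarith

/-- for `b > Nμχ/4` the quantity `w = u + (χ/(2μ))|∇v|²` satisfies the
differential inequality `w_t ≤ Δw + a w`. -/
theorem statement13 (N : ℕ) (hN : 1 ≤ N) (χ a b lam mu : ℝ)
    (hχ : 0 < χ) (ha : 0 < a) (hb : 0 < b) (hlam : 0 < lam) (hmu : 0 < mu)
    (hcond : b > N * mu * χ / 4)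
    (u v : Eu N → ℝ → ℝ)
    (hru : ∀ t : ℝ, 0 < t → ContDiff ℝ 2 (fun x => u x t))
    (hrv : ∀ t : ℝ, 0 < t → ContDiff ℝ 3 (fun x => v x t))
    (hpdeu : ∀ (x : Eu N) (t : ℝ), 0 < t →
      HasDerivAt (fun s => u x s)
        (lap (fun y => u y t) x
          - χ * divg (fun y => u y t • gradient (fun z => v z t) y) x
          + u x t * (a - b * u x t)) t)
    (hpdev : ∀ (x : Eu N) (t : ℝ), 0 < t →
      HasDerivAt (fun s => v x s)
        (lap (fun y => v y t) x - lam * v x t + mu * u x t) t)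
    (hgv : ∀ (x : Eu N) (t : ℝ), 0 < t →
      HasDerivAt (fun s => gradient (fun y => v y s) x)
        (gradient (fun y => deriv (fun s => v y s) t) x) t)
    (hgvc : ∀ x : Eu N, ContinuousOn
      (fun t : ℝ => gradient (fun y => deriv (fun s => v y s) t) x) (Set.Ioi 0)) :
    ∀ (x : Eu N) (t : ℝ), 0 < t →
      deriv (fun s => u x s + χ / (2 * mu) * ‖gradient (fun y => v y s) x‖ ^ 2) t ≤
        lap (fun y => u y t + χ / (2 * mu) * ‖gradient (fun z => v z t) y‖ ^ 2) x
          + a * (u x t + χ / (2 * mu) * ‖gradient (fun y => v y t) x‖ ^ 2) :=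
  statement13_general N χ a b lam mu hχ ha hlam hmu hcond u v hru hrv hpdeu hpdev hgv
end
end

section
/- Suppose b > Nμχ/4. Let u₀ ∈ X₁⁺, v₀ ∈ X₂⁺, and let (u, v) be a bounded nonnegative global classical solution of (KS) with initial data (u₀, v₀) such that v is three times continuously differentiable in x with ∂_t ∇v = ∇ ∂_t v on ℝ^N × (0,∞), ∇v is continuous on ℝ^N × [0,∞) with ∇v(·,0) = ∇v₀, and u + (χ/(2μ))|∇v|² is bounded on ℝ^N × [0,T] for every T > 0. Let 0 < k < √a, set c = (k² + a)/k, and let ξ ∈ S^{N−1} and M > 0 be such that u₀(x) + (χ/(2μ)) |∇v₀(x)|² ≤ M e^{−k x·ξ} for all x ∈ ℝ^N. Then u(x,t) ≤ M e^{−k(x·ξ − c t)} for all x ∈ ℝ^N and t > 0. -/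
/-!
The quantity `w = u + (χ / 2μ) ‖∇v‖²` is a subsolution of `w_t = Δw + a w`. Differentiating, the
chemotactic cross terms `χ ∇u·∇v` cancel, Bochner's formula turns `Δ‖∇v‖²` into
`2 ∇v·∇Δv + 2 ‖D²v‖²`, and the remaining term `-χ u Δv` is absorbed by `(χ/μ) ‖D²v‖²` and the
logistic damping `-b u²` once `b ≥ N μ χ / 4`, by completing the square in each diagonal entry of
the Hessian. The front `W = M e^{-k (x·ξ - c t)}` solves `W_t = ΔW + a W` because `k c = k² + a`,
and `w(·,0) ≤ W(·,0)`. The weak maximum principle applied to `e^{-a t} (w - W)` gives `u ≤ w ≤ W`;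
as `w` is only bounded above on time strips, the maximum principle first subtracts a penalty
`δ (‖x‖² + (2N+1) t)`, after which the maximum is attained on a compact set.
-/

open Real Filter MeasureTheory RealInnerProductSpace

noncomputable section

namespace Chemotaxis

section PartialDerivatives

variable {N : ℕ} {f g : Eu N → ℝ} {x : Eu N}

lemma gradient_apply (f : Eu N → ℝ) (x : Eu N) (i : Fin N) : gradient f x i = pd f i x := by
  rw [pd, ← inner_gradient_left, EuclideanSpace.inner_single_right]
  simp

lemma inner_gradient (f g : Eu N → ℝ) (x : Eu N) :
    ⟪gradient f x, gradient g x⟫ = ∑ i, pd f i x * pd g i x := by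
  rw [PiLp.inner_apply]
  simp [gradient_apply, mul_comm]

lemma norm_gradient_sq (f : Eu N → ℝ) (x : Eu N) :
    ‖gradient f x‖ ^ 2 = ∑ i, pd f i x ^ 2 := by
  simp [EuclideanSpace.real_norm_sq_eq, gradient_apply]

lemma contDiff_pd {n : ℕ} (hf : ContDiff ℝ (n + 1) f) (i : Fin N) :
    ContDiff ℝ n (fun y => pd f i y) :=
  (ContinuousLinearMap.apply ℝ ℝ (EuclideanSpace.single i 1)).contDiff.comp
    (hf.fderiv_right (by exact_mod_cast le_rfl))

lemma differentiable_pd (hf : ContDiff ℝ 2 f) (i : Fin N) :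
    Differentiable ℝ (fun y => pd f i y) :=
  (contDiff_pd (n := 1) hf i).differentiable one_ne_zero

lemma pd_clm (L : Eu N →L[ℝ] ℝ) (i : Fin N) (x : Eu N) :
    pd L i x = L (EuclideanSpace.single i 1) := by
  rw [pd, L.fderiv]

lemma pd_const (c : ℝ) (i : Fin N) (x : Eu N) : pd (fun _ => c) i x = 0 := by
  simp [pd]

lemma pd_add (hf : DifferentiableAt ℝ f x) (hg : DifferentiableAt ℝ g x) (i : Fin N) :
    pd (fun y => f y + g y) i x = pd f i x + pd g i x := by
  simp [pd, fderiv_fun_add hf hg]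

lemma pd_sub (hf : DifferentiableAt ℝ f x) (hg : DifferentiableAt ℝ g x) (i : Fin N) :
    pd (fun y => f y - g y) i x = pd f i x - pd g i x := by
  simp [pd, fderiv_fun_sub hf hg]

lemma pd_const_mul (hf : DifferentiableAt ℝ f x) (c : ℝ) (i : Fin N) :
    pd (fun y => c * f y) i x = c * pd f i x := by
  simp [pd, fderiv_const_mul hf c]

lemma pd_mul (hf : DifferentiableAt ℝ f x) (hg : DifferentiableAt ℝ g x) (i : Fin N) :
    pd (fun y => f y * g y) i x = f x * pd g i x + g x * pd f i x := by
  simp [pd, fderiv_fun_mul hf hg]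

lemma pd_sum {ι : Type*} (s : Finset ι) {F : ι → Eu N → ℝ}
    (hF : ∀ j ∈ s, DifferentiableAt ℝ (F j) x) (i : Fin N) :
    pd (fun y => ∑ j ∈ s, F j y) i x = ∑ j ∈ s, pd (F j) i x := by
  simp [pd, fderiv_fun_sum hF]

lemma pd_exp (hf : DifferentiableAt ℝ f x) (i : Fin N) :
    pd (fun y => Real.exp (f y)) i x = Real.exp (f x) * pd f i x := by
  simp [pd, fderiv_exp hf]

lemma pd_norm_sq (i : Fin N) (x : Eu N) : pd (fun y : Eu N => ‖y‖ ^ 2) i x = 2 * x i := by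
  simp [pd, fderiv_norm_sq_apply, EuclideanSpace.inner_single_right]

lemma pd2_symm (hf : ContDiff ℝ 2 f) (i j : Fin N) (x : Eu N) :
    pd2 f i j x = pd2 f j i x := by
  have hdf : Differentiable ℝ (fderiv ℝ f) :=
    (hf.fderiv_right (m := 1) le_rfl).differentiable one_ne_zero
  have h (i j : Fin N) : pd2 f i j x =
      fderiv ℝ (fderiv ℝ f) x (EuclideanSpace.single i 1) (EuclideanSpace.single j 1) := by
    set L := ContinuousLinearMap.apply ℝ ℝ (EuclideanSpace.single (𝕜 := ℝ) j 1)
    rw [pd2, pd, show (fun y => pd f j y) = L ∘ fderiv ℝ f from rfl,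
      (L.hasFDerivAt.comp x (hdf x).hasFDerivAt).fderiv]
    rfl
  rw [h, h]
  exact second_derivative_symmetric (fun y => (hf.differentiable two_ne_zero y).hasFDerivAt)
    (hdf x).hasFDerivAt _ _

end PartialDerivatives

section Laplacian

variable {N : ℕ} {f g V : Eu N → ℝ}

lemma pd2_add (hf : ContDiff ℝ 2 f) (hg : ContDiff ℝ 2 g) (i j : Fin N) (x : Eu N) :
    pd2 (fun y => f y + g y) i j x = pd2 f i j x + pd2 g i j x := by
  have hpd : (fun y => pd (fun z => f z + g z) j y) = fun y => pd f j y + pd g j y :=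
    funext fun y => pd_add (hf.differentiable two_ne_zero y) (hg.differentiable two_ne_zero y) j
  rw [pd2, hpd]
  exact pd_add (differentiable_pd hf j x) (differentiable_pd hg j x) i

lemma pd2_sub (hf : ContDiff ℝ 2 f) (hg : ContDiff ℝ 2 g) (i j : Fin N) (x : Eu N) :
    pd2 (fun y => f y - g y) i j x = pd2 f i j x - pd2 g i j x := by
  have hpd : (fun y => pd (fun z => f z - g z) j y) = fun y => pd f j y - pd g j y :=
    funext fun y => pd_sub (hf.differentiable two_ne_zero y) (hg.differentiable two_ne_zero y) j
  rw [pd2, hpd]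
  exact pd_sub (differentiable_pd hf j x) (differentiable_pd hg j x) i

lemma pd2_const_mul (hf : ContDiff ℝ 2 f) (c : ℝ) (i j : Fin N) (x : Eu N) :
    pd2 (fun y => c * f y) i j x = c * pd2 f i j x := by
  have hpd : (fun y => pd (fun z => c * f z) j y) = fun y => c * pd f j y :=
    funext fun y => pd_const_mul (hf.differentiable two_ne_zero y) c j
  rw [pd2, hpd]
  exact pd_const_mul (differentiable_pd hf j x) c i

lemma pd2_sum {ι : Type*} (s : Finset ι) {F : ι → Eu N → ℝ} (hF : ∀ j ∈ s, ContDiff ℝ 2 (F j))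
    (i k : Fin N) (x : Eu N) :
    pd2 (fun y => ∑ j ∈ s, F j y) i k x = ∑ j ∈ s, pd2 (F j) i k x := by
  have hpd : (fun y => pd (fun z => ∑ j ∈ s, F j z) k y) = fun y => ∑ j ∈ s, pd (F j) k y :=
    funext fun y => pd_sum s (fun j hj => (hF j hj).differentiable two_ne_zero y) k
  rw [pd2, hpd]
  exact pd_sum s (fun j hj => differentiable_pd (hF j hj) k x) i

lemma lap_add (hf : ContDiff ℝ 2 f) (hg : ContDiff ℝ 2 g) (x : Eu N) :
    lap (fun y => f y + g y) x = lap f x + lap g x := by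
  simp only [lap, pd2_add hf hg, Finset.sum_add_distrib]

lemma lap_sub (hf : ContDiff ℝ 2 f) (hg : ContDiff ℝ 2 g) (x : Eu N) :
    lap (fun y => f y - g y) x = lap f x - lap g x := by
  simp only [lap, pd2_sub hf hg, Finset.sum_sub_distrib]

lemma lap_const_mul (hf : ContDiff ℝ 2 f) (c : ℝ) (x : Eu N) :
    lap (fun y => c * f y) x = c * lap f x := by
  simp only [lap, pd2_const_mul hf, Finset.mul_sum]

lemma lap_sum {ι : Type*} (s : Finset ι) {F : ι → Eu N → ℝ} (hF : ∀ j ∈ s, ContDiff ℝ 2 (F j))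
    (x : Eu N) : lap (fun y => ∑ j ∈ s, F j y) x = ∑ j ∈ s, lap (F j) x := by
  simp only [lap, pd2_sum s hF]
  exact Finset.sum_comm

lemma lap_const (c : ℝ) (x : Eu N) : lap (fun _ : Eu N => c) x = 0 := by
  simp [lap, pd2, pd_const]

lemma lap_norm_sq (x : Eu N) : lap (fun y : Eu N => ‖y‖ ^ 2) x = 2 * N := by
  have hcoord (i : Fin N) : pd2 (fun y : Eu N => ‖y‖ ^ 2) i i x = 2 := by
    have hproj : DifferentiableAt ℝ (fun y : Eu N => y i) x :=
      (EuclideanSpace.proj i : Eu N →L[ℝ] ℝ).differentiableAt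
    have hpd : pd (fun y : Eu N => y i) i x = 1 := by
      simpa using pd_clm (EuclideanSpace.proj i : Eu N →L[ℝ] ℝ) i x
    rw [pd2, funext fun y => pd_norm_sq i y, pd_const_mul hproj, hpd, mul_one]
  simp [lap, hcoord, mul_comm]

lemma lap_sq (hf : ContDiff ℝ 2 f) (x : Eu N) :
    lap (fun y => f y ^ 2) x = 2 * f x * lap f x + 2 * ∑ i, pd f i x ^ 2 := by
  have hd := hf.differentiable two_ne_zero
  have hpd (i : Fin N) : (fun y => pd (fun z => f z ^ 2) i y) = fun y => 2 * (f y * pd f i y) := by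
    funext y
    simp only [sq, pd_mul (hd y) (hd y)]
    ring
  have hpd2 (i : Fin N) :
      pd2 (fun y => f y ^ 2) i i x = 2 * (f x * pd2 f i i x) + 2 * pd f i x ^ 2 := by
    rw [pd2, hpd,
      pd_const_mul (f := fun y => f y * pd f i y) ((hd x).mul (differentiable_pd hf i x)),
      pd_mul (hd x) (differentiable_pd hf i x), pd2]
    ring
  simp only [lap, hpd2, Finset.sum_add_distrib, ← Finset.mul_sum]
  ring

lemma pd_lap (hV : ContDiff ℝ 3 V) (j : Fin N) (x : Eu N) :
    pd (fun y => lap V y) j x = lap (fun y => pd V j y) x := by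
  have hV2 : ContDiff ℝ 2 V := hV.of_le (by norm_num)
  have hpdV (i : Fin N) : ContDiff ℝ 2 (fun y => pd V i y) := contDiff_pd hV i
  change pd (fun y => ∑ i, pd2 V i i y) j x = ∑ i, pd2 (fun y => pd V j y) i i x
  rw [pd_sum (F := fun i y => pd2 V i i y) Finset.univ
    (fun i _ => differentiable_pd (hpdV i) i x)]
  refine Finset.sum_congr rfl fun i _ => ?_
  calc pd (fun y => pd2 V i i y) j x = pd2 (fun y => pd V i y) i j x := pd2_symm (hpdV i) j i x
    _ = pd (fun y => pd2 V j i y) i x := rfl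
    _ = pd2 (fun y => pd V j y) i i x := by rw [funext fun y => pd2_symm hV2 j i y]; rfl

lemma differentiable_lap (hV : ContDiff ℝ 3 V) : Differentiable ℝ (fun y => lap V y) :=
  Differentiable.fun_sum fun i _ => differentiable_pd (contDiff_pd hV i) i

lemma contDiff_norm_gradient_sq (hV : ContDiff ℝ 3 V) :
    ContDiff ℝ 2 (fun y => ‖gradient V y‖ ^ 2) := by
  simp only [norm_gradient_sq]
  exact ContDiff.sum fun i _ => (contDiff_pd hV i).pow 2

lemma lap_norm_gradient_sq (hV : ContDiff ℝ 3 V) (x : Eu N) :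
    lap (fun y => ‖gradient V y‖ ^ 2) x
      = 2 * ⟪gradient V x, gradient (fun y => lap V y) x⟫ + 2 * ∑ j, ∑ i, pd2 V i j x ^ 2 := by
  have hpdV (j : Fin N) : ContDiff ℝ 2 (fun y => pd V j y) := contDiff_pd hV j
  simp only [norm_gradient_sq]
  rw [lap_sum Finset.univ (fun j _ => (hpdV j).pow 2)]
  simp only [lap_sq (hpdV _), ← pd_lap hV, inner_gradient, Finset.sum_add_distrib,
    Finset.mul_sum]
  congr 1
  exact Finset.sum_congr rfl fun j _ => by ring

lemma divg_smul_gradient (hU : Differentiable ℝ f) (hV : ContDiff ℝ 2 V) (x : Eu N) :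
    divg (fun y => f y • gradient V y) x = ⟪gradient f x, gradient V x⟫ + f x * lap V x := by
  have hcomp (i : Fin N) : (fun y => (f y • gradient V y) i) = fun y => f y * pd V i y :=
    funext fun y => by rw [PiLp.smul_apply, gradient_apply, smul_eq_mul]
  have hterm (i : Fin N) : fderiv ℝ (fun y => (f y • gradient V y) i) x
      (EuclideanSpace.single i 1) = f x * pd2 V i i x + pd V i x * pd f i x := by
    rw [hcomp, ← pd, pd_mul (hU x) (differentiable_pd hV i x), pd2]
  simp only [divg, hterm, Finset.sum_add_distrib, inner_gradient, lap, Finset.mul_sum, mul_comm]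
  ring

end Laplacian

section Extrema

open Topology

lemma deriv_deriv_nonpos_of_isLocalMax {φ : ℝ → ℝ} {s : ℝ} (hmax : IsLocalMax φ s)
    (hc : ContinuousAt φ s) : deriv (deriv φ) s ≤ 0 := by
  by_contra! hpos
  have hmin := isLocalMin_of_deriv_deriv_pos hpos hmax.deriv_eq_zero hc
  have hconst : φ =ᶠ[𝓝 s] fun _ => φ s := by
    filter_upwards [hmax, hmin] with r h₁ h₂ using le_antisymm h₁ h₂
  have hderiv : deriv φ =ᶠ[𝓝 s] fun _ => 0 := by
    simpa using hconst.deriv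
  simp [hderiv.deriv_eq] at hpos

lemma HasDerivAt.nonneg_of_isMaxOn_Icc {f : ℝ → ℝ} {d a t T : ℝ} (hf : HasDerivAt f d t)
    (hat : a < t) (htT : t ≤ T) (hmax : IsMaxOn f (Set.Icc a T) t) : 0 ≤ d := by
  have hseg : segment ℝ t a ⊆ Set.Icc a T := by
    rw [segment_symm]
    exact (segment_subset_Icc hat.le).trans (Set.Icc_subset_Icc_right htT)
  have := hmax.localize.hasFDerivWithinAt_nonpos hf.hasFDerivAt.hasFDerivWithinAt
    (sub_mem_posTangentConeAt_of_segment_subset hseg)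
  simp only [ContinuousLinearMap.toSpanSingleton_apply, smul_eq_mul] at this
  nlinarith

variable {N : ℕ}

lemma pd2_self_nonpos_of_isLocalMax {ψ : Eu N → ℝ} (hψ : ContDiff ℝ 2 ψ) {x : Eu N}
    (hmax : IsLocalMax ψ x) (i : Fin N) : pd2 ψ i i x ≤ 0 := by
  set e : Eu N := EuclideanSpace.single i 1
  have hline (s : ℝ) : HasDerivAt (fun s : ℝ => x + s • e) e s := by
    simpa using ((hasDerivAt_id s).smul_const e).const_add x
  have hderiv : deriv (fun s : ℝ => ψ (x + s • e)) = fun s => pd ψ i (x + s • e) :=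
    funext fun s =>
      ((hψ.differentiable two_ne_zero _).hasFDerivAt.comp_hasDerivAt s (hline s)).deriv
  have hderiv2 : HasDerivAt (fun s : ℝ => pd ψ i (x + s • e)) (pd2 ψ i i x) 0 := by
    have h := (differentiable_pd hψ i (x + (0 : ℝ) • e)).hasFDerivAt.comp_hasDerivAt 0 (hline 0)
    rw [zero_smul, add_zero] at h
    exact h
  have hmax' : IsLocalMax (fun s : ℝ => ψ (x + s • e)) 0 :=
    IsLocalMax.comp_continuous (g := fun s : ℝ => x + s • e) (by simpa using hmax)
      (hline 0).continuousAt
  have := deriv_deriv_nonpos_of_isLocalMax hmax'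
    (hψ.continuous.continuousAt.comp (hline 0).continuousAt)
  rwa [hderiv, hderiv2.deriv] at this

lemma lap_nonpos_of_isLocalMax {ψ : Eu N → ℝ} (hψ : ContDiff ℝ 2 ψ) {x : Eu N}
    (hmax : IsLocalMax ψ x) : lap ψ x ≤ 0 :=
  Finset.sum_nonpos fun i _ => pd2_self_nonpos_of_isLocalMax hψ hmax i

end Extrema

section MaximumPrinciple

open Topology

variable {N : ℕ}

lemma nonpos_of_strict_subsolution (G : Eu N → ℝ → ℝ) {T R : ℝ}
    (hcont : ContinuousOn (fun p : Eu N × ℝ => G p.1 p.2) {p : Eu N × ℝ | 0 ≤ p.2})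
    (hreg : ∀ t : ℝ, 0 < t → ContDiff ℝ 2 (fun y => G y t))
    (hder : ∀ (x : Eu N) (t : ℝ), 0 < t → t ≤ T →
      ∃ d, HasDerivAt (fun s => G x s) d t ∧ d < lap (fun y => G y t) x)
    (hfar : ∀ (x : Eu N) (t : ℝ), 0 ≤ t → t ≤ T → R ≤ ‖x‖ → G x t ≤ 0)
    (hinit : ∀ x, G x 0 ≤ 0) :
    ∀ (x : Eu N) (t : ℝ), 0 ≤ t → t ≤ T → G x t ≤ 0 := by
  intro x₀ t₀ ht₀ ht₀T
  by_contra! hpos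
  set K := Metric.closedBall (0 : Eu N) R ×ˢ Set.Icc (0 : ℝ) T
  have hinK (x : Eu N) (t : ℝ) (ht : 0 ≤ t) (htT : t ≤ T) (hGx : 0 < G x t) : (x, t) ∈ K := by
    refine ⟨mem_closedBall_zero_iff.2 ?_, ht, htT⟩
    by_contra! hR
    exact hGx.not_ge (hfar x t ht htT hR.le)
  obtain ⟨⟨xs, ts⟩, hsK, hsmax⟩ :=
    ((isCompact_closedBall _ _).prod isCompact_Icc).exists_isMaxOn ⟨_, hinK x₀ t₀ ht₀ ht₀T hpos⟩
      (hcont.mono fun p hp => hp.2.1)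
  have hGs : 0 < G xs ts := hpos.trans_le (hsmax (hinK x₀ t₀ ht₀ ht₀T hpos))
  have hglob (x : Eu N) (t : ℝ) (ht : 0 ≤ t) (htT : t ≤ T) : G x t ≤ G xs ts := by
    rcases le_or_gt (G x t) 0 with hle | hgt
    · exact hle.trans hGs.le
    · exact hsmax (hinK x t ht htT hgt)
  have hts : 0 < ts := by
    rcases hsK.2.1.eq_or_lt with h0 | h0
    · exact absurd (h0 ▸ hinit xs) hGs.not_ge
    · exact h0
  obtain ⟨d, hd, hdlap⟩ := hder xs ts hts hsK.2.2
  have hd_nonneg : 0 ≤ d := HasDerivAt.nonneg_of_isMaxOn_Icc hd hts hsK.2.2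
    (isMaxOn_iff.2 fun s hs => hglob xs s hs.1 hs.2)
  have hlap_nonpos : lap (fun y => G y ts) xs ≤ 0 := lap_nonpos_of_isLocalMax (hreg ts hts)
    ((isMaxOn_univ_iff.2 fun y => hglob y ts hsK.2.1 hsK.2.2).isLocalMax Filter.univ_mem)
  linarith

lemma le_penalty_of_subsolution (Z : Eu N → ℝ → ℝ)
    (hcont : ContinuousOn (fun p : Eu N × ℝ => Z p.1 p.2) {p : Eu N × ℝ | 0 ≤ p.2})
    (hreg : ∀ t : ℝ, 0 < t → ContDiff ℝ 2 (fun y => Z y t))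
    (hder : ∀ (x : Eu N) (t : ℝ), 0 < t →
      ∃ d, HasDerivAt (fun s => Z x s) d t ∧ d ≤ lap (fun y => Z y t) x)
    (hbd : ∀ T : ℝ, 0 < T → ∃ C, ∀ (x : Eu N) (t : ℝ), 0 ≤ t → t ≤ T → Z x t ≤ C)
    (hinit : ∀ x, Z x 0 ≤ 0) {δ : ℝ} (hδ : 0 < δ) (x : Eu N) {t : ℝ} (ht : 0 ≤ t) :
    Z x t ≤ δ * (‖x‖ ^ 2 + (2 * N + 1) * t) := by
  obtain ⟨C, hC⟩ := hbd (t + 1) (by linarith)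
  set G : Eu N → ℝ → ℝ := fun y s => Z y s - δ * (‖y‖ ^ 2 + (2 * N + 1) * s)
  have hpen (s : ℝ) : ContDiff ℝ 2 (fun y : Eu N => ‖y‖ ^ 2 + (2 * N + 1) * s) :=
    (contDiff_norm_sq ℝ).add contDiff_const
  have hlapG (s : ℝ) (hs : 0 < s) (y : Eu N) :
      lap (fun y => G y s) y = lap (fun y => Z y s) y - δ * (2 * N) := by
    rw [lap_sub (hreg s hs) (contDiff_const.mul (hpen s)), lap_const_mul (hpen s),
      lap_add (contDiff_norm_sq ℝ) contDiff_const, lap_norm_sq, lap_const, add_zero]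
  suffices hG : G x t ≤ 0 by simpa [G, sub_nonpos] using hG
  refine nonpos_of_strict_subsolution G (T := t + 1) (R := √(|C| / δ)) ?_ ?_ ?_ ?_ ?_ x t ht
    (by linarith)
  · exact hcont.sub (by fun_prop)
  · exact fun s hs => (hreg s hs).sub (contDiff_const.mul (hpen s))
  · intro y s hs _
    obtain ⟨d, hd, hdle⟩ := hder y s hs
    have hpen' : HasDerivAt (fun s : ℝ => δ * (‖y‖ ^ 2 + (2 * N + 1) * s))
        (δ * (2 * N + 1)) s := by
      simpa using (((hasDerivAt_id s).const_mul (2 * (N : ℝ) + 1)).const_add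
        (‖y‖ ^ 2)).const_mul δ
    refine ⟨d - δ * (2 * N + 1), hd.sub hpen', ?_⟩
    rw [hlapG s hs]
    linarith
  · intro y s hs hsT hR
    have hCy : |C| ≤ δ * ‖y‖ ^ 2 := by
      have h := pow_le_pow_left₀ (Real.sqrt_nonneg _) hR 2
      rw [Real.sq_sqrt (by positivity), div_le_iff₀ hδ] at h
      linarith
    have hs' : 0 ≤ (2 * (N : ℝ) + 1) * s := by positivity
    simp only [G]
    nlinarith [hC y s hs hsT, le_abs_self C]
  · intro y
    simp only [G]
    nlinarith [hinit y, sq_nonneg ‖y‖]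

lemma nonpos_of_subsolution (Z : Eu N → ℝ → ℝ)
    (hcont : ContinuousOn (fun p : Eu N × ℝ => Z p.1 p.2) {p : Eu N × ℝ | 0 ≤ p.2})
    (hreg : ∀ t : ℝ, 0 < t → ContDiff ℝ 2 (fun y => Z y t))
    (hder : ∀ (x : Eu N) (t : ℝ), 0 < t →
      ∃ d, HasDerivAt (fun s => Z x s) d t ∧ d ≤ lap (fun y => Z y t) x)
    (hbd : ∀ T : ℝ, 0 < T → ∃ C, ∀ (x : Eu N) (t : ℝ), 0 ≤ t → t ≤ T → Z x t ≤ C)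
    (hinit : ∀ x, Z x 0 ≤ 0) :
    ∀ (x : Eu N) (t : ℝ), 0 ≤ t → Z x t ≤ 0 := by
  intro x t ht
  have hlim : Tendsto (fun δ : ℝ => δ * (‖x‖ ^ 2 + (2 * N + 1) * t)) (𝓝[>] 0) (𝓝 0) := by
    simpa using (tendsto_id.mul_const (‖x‖ ^ 2 + (2 * N + 1) * t)).mono_left
      (nhdsWithin_le_nhds (a := (0 : ℝ)) (s := Set.Ioi 0))
  exact ge_of_tendsto hlim (eventually_nhdsWithin_of_forall fun δ hδ =>
    le_penalty_of_subsolution Z hcont hreg hder hbd hinit hδ x ht)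

end MaximumPrinciple

section PlaneWave

variable {N : ℕ}

def planeWave (M k c : ℝ) (ξ x : Eu N) (t : ℝ) : ℝ := M * Real.exp (-k * (⟪x, ξ⟫ - c * t))

variable (M k c : ℝ) (ξ : Eu N)

lemma continuous_planeWave : Continuous (fun p : Eu N × ℝ => planeWave M k c ξ p.1 p.2) := by
  unfold planeWave
  fun_prop

lemma contDiff_planeWave (t : ℝ) : ContDiff ℝ 2 (fun y => planeWave M k c ξ y t) := by
  have hinner : ContDiff ℝ 2 (fun y : Eu N => ⟪y, ξ⟫) := contDiff_id.inner ℝ contDiff_const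
  unfold planeWave
  fun_prop

lemma pd_inner_right (i : Fin N) (x : Eu N) : pd (fun y : Eu N => ⟪y, ξ⟫) i x = ξ i := by
  rw [show (fun y : Eu N => ⟪y, ξ⟫) = innerSL ℝ ξ from funext fun y => real_inner_comm ξ y,
    pd_clm]
  simp [EuclideanSpace.inner_single_right]

lemma pd_planeWave (t : ℝ) (i : Fin N) (x : Eu N) :
    pd (fun y => planeWave M k c ξ y t) i x = -k * ξ i * planeWave M k c ξ x t := by
  have hinner : DifferentiableAt ℝ (fun y : Eu N => ⟪y, ξ⟫) x :=
    differentiableAt_id.inner ℝ (differentiableAt_const ξ)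
  have hexp : DifferentiableAt ℝ (fun y : Eu N => -k * (⟪y, ξ⟫ - c * t)) x := by fun_prop
  simp only [planeWave]
  rw [pd_const_mul hexp.exp, pd_exp hexp,
    pd_const_mul (f := fun y => ⟪y, ξ⟫ - c * t) (hinner.sub (differentiableAt_const _)),
    pd_sub hinner (differentiableAt_const _), pd_inner_right, pd_const]
  ring

lemma lap_planeWave (hξ : ‖ξ‖ = 1) (t : ℝ) (x : Eu N) :
    lap (fun y => planeWave M k c ξ y t) x = k ^ 2 * planeWave M k c ξ x t := by
  have hpd2 (i : Fin N) : pd2 (fun y => planeWave M k c ξ y t) i i x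
      = k ^ 2 * planeWave M k c ξ x t * ξ i ^ 2 := by
    rw [pd2, funext fun y => pd_planeWave M k c ξ t i y,
      pd_const_mul ((contDiff_planeWave M k c ξ t).differentiable two_ne_zero x),
      pd_planeWave]
    ring
  rw [lap, Finset.sum_congr rfl fun i _ => hpd2 i, ← Finset.mul_sum,
    ← EuclideanSpace.real_norm_sq_eq, hξ, one_pow, mul_one]

lemma hasDerivAt_planeWave (x : Eu N) (t : ℝ) :
    HasDerivAt (fun s => planeWave M k c ξ x s) (k * c * planeWave M k c ξ x t) t := by
  have h := (((hasDerivAt_id t).const_mul c).const_sub ⟪x, ξ⟫).const_mul (-k) |>.exp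
    |>.const_mul M
  refine h.congr_deriv ?_
  simp only [planeWave, id]
  ring

end PlaneWave

section Comparison

variable {N : ℕ}

lemma le_of_subsolution_of_supersolution (a : ℝ) (w W : Eu N → ℝ → ℝ)
    (hw_cont : ContinuousOn (fun p : Eu N × ℝ => w p.1 p.2) {p : Eu N × ℝ | 0 ≤ p.2})
    (hW_cont : ContinuousOn (fun p : Eu N × ℝ => W p.1 p.2) {p : Eu N × ℝ | 0 ≤ p.2})
    (hw_reg : ∀ t : ℝ, 0 < t → ContDiff ℝ 2 (fun y => w y t))
    (hW_reg : ∀ t : ℝ, 0 < t → ContDiff ℝ 2 (fun y => W y t))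
    (hw : ∀ (x : Eu N) (t : ℝ), 0 < t →
      ∃ d, HasDerivAt (fun s => w x s) d t ∧ d ≤ lap (fun y => w y t) x + a * w x t)
    (hW : ∀ (x : Eu N) (t : ℝ), 0 < t →
      ∃ D, HasDerivAt (fun s => W x s) D t ∧ lap (fun y => W y t) x + a * W x t ≤ D)
    (hbd : ∀ T : ℝ, 0 < T → ∃ C, ∀ (x : Eu N) (t : ℝ), 0 ≤ t → t ≤ T → w x t - W x t ≤ C)
    (hinit : ∀ x, w x 0 ≤ W x 0) :
    ∀ (x : Eu N) (t : ℝ), 0 ≤ t → w x t ≤ W x t := by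
  set Z : Eu N → ℝ → ℝ := fun y s => Real.exp (-a * s) * (w y s - W y s)
  have hZ_reg (t : ℝ) (ht : 0 < t) : ContDiff ℝ 2 (fun y => w y t - W y t) :=
    (hw_reg t ht).sub (hW_reg t ht)
  have hZ : ∀ (x : Eu N) (t : ℝ), 0 ≤ t → Z x t ≤ 0 := by
    refine nonpos_of_subsolution Z ?_ ?_ ?_ ?_ ?_
    · exact (Continuous.continuousOn (by fun_prop)).mul (hw_cont.sub hW_cont)
    · exact fun t ht => contDiff_const.mul (hZ_reg t ht)
    · intro x t ht
      obtain ⟨d, hd, hdle⟩ := hw x t ht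
      obtain ⟨D, hD, hDge⟩ := hW x t ht
      have hexp : HasDerivAt (fun s : ℝ => Real.exp (-a * s)) (-a * Real.exp (-a * t)) t := by
        simpa [mul_comm] using ((hasDerivAt_id t).const_mul (-a)).exp
      refine ⟨_, hexp.mul (hd.sub hD), ?_⟩
      rw [lap_const_mul (hZ_reg t ht), lap_sub (hw_reg t ht) (hW_reg t ht)]
      nlinarith [Real.exp_pos (-a * t)]
    · intro T hT
      obtain ⟨C, hC⟩ := hbd T hT
      refine ⟨Real.exp (|a| * T) * max C 0, fun x t ht htT => ?_⟩
      have hexp : Real.exp (-a * t) ≤ Real.exp (|a| * T) :=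
        Real.exp_le_exp.2 (by nlinarith [neg_abs_le a, abs_nonneg a])
      calc Z x t ≤ Real.exp (-a * t) * max C 0 :=
            mul_le_mul_of_nonneg_left ((hC x t ht htT).trans (le_max_left C 0)) (Real.exp_pos _).le
        _ ≤ Real.exp (|a| * T) * max C 0 := mul_le_mul_of_nonneg_right hexp (le_max_right C 0)
    · intro x
      simpa [Z] using hinit x
  intro x t ht
  exact sub_nonpos.1 (nonpos_of_mul_nonpos_right (hZ x t ht) (Real.exp_pos _))

end Comparison

section Energy

variable {N : ℕ}

lemma inner_gradient_sub_add {f g h : Eu N → ℝ} {x : Eu N} (hf : DifferentiableAt ℝ f x)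
    (hg : DifferentiableAt ℝ g x) (hh : DifferentiableAt ℝ h x) (α β : ℝ) (q : Eu N) :
    ⟪q, gradient (fun y => f y - α * g y + β * h y) x⟫
      = ⟪q, gradient f x⟫ - α * ⟪q, gradient g x⟫ + β * ⟪q, gradient h x⟫ := by
  simp only [← real_inner_comm q, inner_gradient_left]
  rw [((hf.hasFDerivAt.fun_sub (hg.hasFDerivAt.const_mul α)).fun_add
    (hh.hasFDerivAt.const_mul β)).fderiv]
  simp

lemma sum_sq_add_mul_sum_add_nonneg {ι : Type*} (s : Finset ι) (p : ι → ℝ) (m : ℝ) :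
    0 ≤ ∑ i ∈ s, p i ^ 2 + m * ∑ i ∈ s, p i + s.card * m ^ 2 / 4 := by
  have h : ∑ i ∈ s, (p i + m / 2) ^ 2 = ∑ i ∈ s, (p i ^ 2 + m * p i + m ^ 2 / 4) :=
    Finset.sum_congr rfl fun i _ => by ring
  rw [Finset.sum_add_distrib, Finset.sum_add_distrib, Finset.sum_const, ← Finset.mul_sum,
    nsmul_eq_mul] at h
  have : 0 ≤ ∑ i ∈ s, (p i + m / 2) ^ 2 := Finset.sum_nonneg fun i _ => sq_nonneg _
  linarith

lemma hessian_sq_add_mul_lap_nonneg (V : Eu N → ℝ) (x : Eu N) (m : ℝ) :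
    0 ≤ ∑ j, ∑ i, pd2 V i j x ^ 2 + m * lap V x + N * m ^ 2 / 4 := by
  have hdiag : ∑ i, pd2 V i i x ^ 2 ≤ ∑ j, ∑ i, pd2 V i j x ^ 2 :=
    Finset.sum_le_sum fun j _ => Finset.single_le_sum (f := fun i => pd2 V i j x ^ 2)
      (fun i _ => sq_nonneg _) (Finset.mem_univ j)
  have := sum_sq_add_mul_sum_add_nonneg Finset.univ (fun i => pd2 V i i x) m
  simp only [Finset.card_univ, Fintype.card_fin] at this
  rw [lap]
  linarith

variable {χ a b lam mu : ℝ}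

lemma rhs_le_lap_energy_add (hχ : 0 ≤ χ) (ha : 0 ≤ a) (hlam : 0 ≤ lam) (hmu : 0 < mu)
    (hb : N * mu * χ / 4 ≤ b) {U V : Eu N → ℝ} (hU : ContDiff ℝ 2 U) (hV : ContDiff ℝ 3 V)
    (x : Eu N) :
    lap U x - χ * divg (fun y => U y • gradient V y) x + U x * (a - b * U x)
      + χ / mu * ⟪gradient V x, gradient (fun y => lap V y - lam * V y + mu * U y) x⟫
    ≤ lap (fun y => U y + χ / (2 * mu) * ‖gradient V y‖ ^ 2) x
      + a * (U x + χ / (2 * mu) * ‖gradient V x‖ ^ 2) := by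
  have hV2 : ContDiff ℝ 2 V := hV.of_le (by norm_num)
  rw [divg_smul_gradient (hU.differentiable two_ne_zero) hV2,
    lap_add hU (contDiff_const.mul (contDiff_norm_gradient_sq hV)),
    lap_const_mul (contDiff_norm_gradient_sq hV), lap_norm_gradient_sq hV,
    inner_gradient_sub_add (differentiable_lap hV x) (hV2.differentiable two_ne_zero x)
      (hU.differentiable two_ne_zero x), real_inner_self_eq_norm_sq,
    real_inner_comm (gradient U x)]
  have hhess := hessian_sq_add_mul_lap_nonneg V x (mu * U x)
  set r := χ / mu
  have hr : 0 ≤ r := div_nonneg hχ hmu.le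
  have hχr : χ = r * mu := (div_mul_cancel₀ χ hmu.ne').symm
  have hr2 : χ / (2 * mu) = r / 2 := by simp only [r]; ring
  rw [hr2, hχr]
  rw [hχr] at hb
  nlinarith [mul_nonneg hr hhess, mul_nonneg (sub_nonneg.2 hb) (sq_nonneg (U x)),
    mul_nonneg (mul_nonneg hr hlam) (sq_nonneg ‖gradient V x‖),
    mul_nonneg (mul_nonneg hr ha) (sq_nonneg ‖gradient V x‖)]

end Energy

section Solution

variable {N : ℕ} {χ a b lam mu : ℝ} {u v : Eu N → ℝ → ℝ} {u₀ v₀ : Eu N → ℝ}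

def energy (χ mu : ℝ) (u v : Eu N → ℝ → ℝ) (x : Eu N) (t : ℝ) : ℝ :=
  u x t + χ / (2 * mu) * ‖gradient (fun y => v y t) x‖ ^ 2

lemma continuousOn_energy
    (hu : ContinuousOn (fun p : Eu N × ℝ => u p.1 p.2) {p : Eu N × ℝ | 0 ≤ p.2})
    (hgv : ContinuousOn (fun p : Eu N × ℝ => gradient (fun y => v y p.2) p.1)
      {p : Eu N × ℝ | 0 ≤ p.2}) :
    ContinuousOn (fun p : Eu N × ℝ => energy χ mu u v p.1 p.2) {p : Eu N × ℝ | 0 ≤ p.2} :=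
  hu.add (continuousOn_const.mul (hgv.norm.pow 2))

lemma contDiff_energy {t : ℝ} (hu : ContDiff ℝ 2 (fun y => u y t))
    (hv : ContDiff ℝ 3 (fun y => v y t)) : ContDiff ℝ 2 (fun y => energy χ mu u v y t) :=
  hu.add (contDiff_const.mul (contDiff_norm_gradient_sq hv))

lemma _root_.IsClassicalSolution.energy_subsolution
    (hsol : IsClassicalSolution χ a b lam mu u v u₀ v₀)
    (hχ : 0 ≤ χ) (ha : 0 ≤ a) (hlam : 0 ≤ lam) (hmu : 0 < mu) (hb : N * mu * χ / 4 ≤ b)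
    {x : Eu N} {t : ℝ} (ht : 0 < t) (hv : ContDiff ℝ 3 (fun y => v y t))
    (hgv : HasDerivAt (fun s => gradient (fun y => v y s) x)
      (gradient (fun y => deriv (fun s => v y s) t) x) t) :
    ∃ d, HasDerivAt (fun s => energy χ mu u v x s) d t ∧
      d ≤ lap (fun y => energy χ mu u v y t) x + a * energy χ mu u v x t := by
  have hvt : (fun y => deriv (fun s => v y s) t)
      = fun y => lap (fun z => v z t) y - lam * v y t + mu * u y t :=
    funext fun y => (hsol.pdev y t ht).deriv
  rw [hvt] at hgv
  refine ⟨_, (hsol.pdeu x t ht).add (hgv.norm_sq.const_mul (χ / (2 * mu))), ?_⟩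
  rw [show ∀ X : ℝ, χ / (2 * mu) * (2 * X) = χ / mu * X from fun X => by ring]
  exact rhs_le_lap_energy_add hχ ha hlam hmu hb (hsol.regu t ht) hv x

end Solution

end Chemotaxis

open Chemotaxis

theorem statement15_general (N : ℕ) (χ a b lam mu : ℝ)
    (hχ : 0 < χ) (ha : 0 < a) (hlam : 0 < lam) (hmu : 0 < mu)
    (hcond : b > N * mu * χ / 4)
    (u₀ v₀ : Eu N → ℝ)
    (u v : Eu N → ℝ → ℝ)
    (hsol : IsClassicalSolution χ a b lam mu u v u₀ v₀)
    (hrv : ∀ t : ℝ, 0 < t → ContDiff ℝ 3 (fun x => v x t))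
    (hgv : ∀ (x : Eu N) (t : ℝ), 0 < t →
      HasDerivAt (fun s => gradient (fun y => v y s) x)
        (gradient (fun y => deriv (fun s => v y s) t) x) t)
    (hgvcont : ContinuousOn
      (fun p : Eu N × ℝ => gradient (fun y => v y p.2) p.1) {p : Eu N × ℝ | 0 ≤ p.2})
    (hgv0 : ∀ x : Eu N, gradient (fun y => v y 0) x = gradient v₀ x)
    (hwbd : ∀ T : ℝ, 0 < T → ∃ C, ∀ (x : Eu N) (t : ℝ), 0 ≤ t → t ≤ T →
      |u x t + χ / (2 * mu) * ‖gradient (fun y => v y t) x‖ ^ 2| ≤ C)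
    (k c : ℝ) (hk : 0 < k) (hc : c = (k ^ 2 + a) / k)
    (ξ : Eu N) (hξ : ‖ξ‖ = 1) (M : ℝ) (hM : 0 < M)
    (hinit : ∀ x : Eu N,
      u₀ x + χ / (2 * mu) * ‖gradient v₀ x‖ ^ 2 ≤ M * Real.exp (-k * ⟪x, ξ⟫)) :
    ∀ (x : Eu N) (t : ℝ), 0 < t →
      u x t ≤ M * Real.exp (-k * (⟪x, ξ⟫ - c * t)) := by
  have hkc : k * c = k ^ 2 + a := by rw [hc]; field_simp
  have hW_nonneg (y : Eu N) (s : ℝ) : 0 ≤ planeWave M k c ξ y s := by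
    unfold planeWave; positivity
  have hW_solution (y : Eu N) (s : ℝ) : ∃ D, HasDerivAt (fun s => planeWave M k c ξ y s) D s ∧
      lap (fun z => planeWave M k c ξ z s) y + a * planeWave M k c ξ y s ≤ D :=
    ⟨_, hasDerivAt_planeWave M k c ξ y s,
      le_of_eq (by rw [lap_planeWave M k c ξ hξ, hkc]; ring)⟩
  have hgap_bd (T : ℝ) (hT : 0 < T) : ∃ C, ∀ (y : Eu N) (s : ℝ), 0 ≤ s → s ≤ T →
      energy χ mu u v y s - planeWave M k c ξ y s ≤ C :=
    (hwbd T hT).imp fun C hC y s hs hsT => by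
      linarith [((le_abs_self _).trans (hC y s hs hsT) : energy χ mu u v y s ≤ C),
        hW_nonneg y s]
  have hinit' (y : Eu N) : energy χ mu u v y 0 ≤ planeWave M k c ξ y 0 := by
    simpa [energy, planeWave, hsol.initu, hgv0] using hinit y
  intro x t ht
  have hcomp := le_of_subsolution_of_supersolution a (energy χ mu u v) (planeWave M k c ξ)
    (continuousOn_energy hsol.contu hgvcont) (continuous_planeWave M k c ξ).continuousOn
    (fun s hs => contDiff_energy (hsol.regu s hs) (hrv s hs))
    (fun s _ => contDiff_planeWave M k c ξ s)
    (fun y s hs => hsol.energy_subsolution hχ.le ha.le hlam.le hmu hcond.le hs (hrv s hs)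
      (hgv y s hs))
    (fun y s _ => hW_solution y s) hgap_bd hinit' x t ht.le
  have hgrad : 0 ≤ χ / (2 * mu) * ‖gradient (fun y => v y t) x‖ ^ 2 := by positivity
  simp only [energy, planeWave] at hcomp
  linarith

/-- exponential upper bound for `u` via comparison for
`w = u + (χ/(2μ))|∇v|²`: if `w(·,0) ≤ M e^{-k x·ξ}` then `u(x,t) ≤ M e^{-k(x·ξ-ct)}`
with `c = (k²+a)/k`. -/
theorem statement15 (N : ℕ) (hN : 1 ≤ N) (χ a b lam mu : ℝ)
    (hχ : 0 < χ) (ha : 0 < a) (hb : 0 < b) (hlam : 0 < lam) (hmu : 0 < mu)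
    (hcond : b > N * mu * χ / 4)
    (u₀ v₀ : Eu N → ℝ) (hu₀ : MemX1plus u₀) (hv₀ : MemX2plus v₀)
    (u v : Eu N → ℝ → ℝ)
    (hsol : IsClassicalSolution χ a b lam mu u v u₀ v₀)
    (hbd : BoundedSol u v) (hnn : NonnegSol u v)
    (hrv : ∀ t : ℝ, 0 < t → ContDiff ℝ 3 (fun x => v x t))
    (hgv : ∀ (x : Eu N) (t : ℝ), 0 < t →
      HasDerivAt (fun s => gradient (fun y => v y s) x)
        (gradient (fun y => deriv (fun s => v y s) t) x) t)
    (hgvcont : ContinuousOn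
      (fun p : Eu N × ℝ => gradient (fun y => v y p.2) p.1) {p : Eu N × ℝ | 0 ≤ p.2})
    (hgv0 : ∀ x : Eu N, gradient (fun y => v y 0) x = gradient v₀ x)
    (hwbd : ∀ T : ℝ, 0 < T → ∃ C, ∀ (x : Eu N) (t : ℝ), 0 ≤ t → t ≤ T →
      |u x t + χ / (2 * mu) * ‖gradient (fun y => v y t) x‖ ^ 2| ≤ C)
    (k c : ℝ) (hk : 0 < k) (hk' : k < Real.sqrt a) (hc : c = (k ^ 2 + a) / k)
    (ξ : Eu N) (hξ : ‖ξ‖ = 1) (M : ℝ) (hM : 0 < M)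
    (hinit : ∀ x : Eu N,
      u₀ x + χ / (2 * mu) * ‖gradient v₀ x‖ ^ 2 ≤ M * Real.exp (-k * ⟪x, ξ⟫)) :
    ∀ (x : Eu N) (t : ℝ), 0 < t →
      u x t ≤ M * Real.exp (-k * (⟪x, ξ⟫ - c * t)) :=
  statement15_general N χ a b lam mu hχ ha hlam hmu hcond u₀ v₀ u v hsol hrv hgv hgvcont hgv0 hwbd k
    c hk hc ξ hξ M hM hinit
end
end
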